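/- arXiv:math/0212183 — 3 statements merged into one kernel-verified Lean document; each statement's English description precedes it below -/
import Mathlib

section
/- Given a geometric classical r-matrix datum on A, the ℂ-span of {b¹_1,…,b¹_n} is a Lie subalgebra of Der(A): for all j,l one has [b¹ⱼ,b¹ₗ] ∈ span_ℂ{b¹_1,…,b¹_n}. -/
/-! In (E3) the first two sums have third tensor factors among the `b¹ₗ`, so the third
sum `∑ b⁰ⱼ ⊗ b⁰ₗ ⊗ [b¹ⱼ, b¹ₗ]` lies in `A ⊗ A ⊗ span{b¹}`. Since the `b⁰` are linearly independent,
pairing the first two factors with functionals dual to `b⁰ⱼ` and `b⁰ₗ` maps this subspace into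
`span{b¹}` and sends the sum to `[b¹ⱼ, b¹ₗ]`. -/

open TensorProduct

set_option synthInstance.maxHeartbeats 1000000
set_option maxHeartbeats 1000000

/-- A *geometric classical r-matrix datum* on a commutative ℂ-algebra `A`:
finite families `a¹ᵢ, b¹ⱼ` of derivations and `a⁰ᵢ, b⁰ⱼ` of elements of `A`,
each linearly independent over ℂ, satisfying the three components (E1)–(E3)
of the classical Yang–Baxter equation. -/
structure GeomRMatrixDatum (A : Type*) [CommRing A] [Algebra ℂ A] where
  m : ℕ
  n : ℕ
  a1 : Fin m → Derivation ℂ A A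
  a0 : Fin m → A
  b1 : Fin n → Derivation ℂ A A
  b0 : Fin n → A
  indep_a1 : LinearIndependent ℂ a1
  indep_a0 : LinearIndependent ℂ a0
  indep_b1 : LinearIndependent ℂ b1
  indep_b0 : LinearIndependent ℂ b0
  E1 : ∑ i, ∑ k, (⁅a1 i, a1 k⁆ ⊗ₜ[ℂ] (a0 i ⊗ₜ[ℂ] a0 k))
      = ∑ i, ∑ k, (a1 i ⊗ₜ[ℂ] ((a1 k) (a0 i) ⊗ₜ[ℂ] a0 k))
      + ∑ i, ∑ l, (a1 i ⊗ₜ[ℂ] (b0 l ⊗ₜ[ℂ] (b1 l) (a0 i)))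
  E2 : ∑ j, ∑ k, ((a1 k) (b0 j) ⊗ₜ[ℂ] (b1 j ⊗ₜ[ℂ] a0 k))
      = ∑ j, ∑ k, (b0 j ⊗ₜ[ℂ] (⁅b1 j, a1 k⁆ ⊗ₜ[ℂ] a0 k))
      + ∑ j, ∑ k, (b0 j ⊗ₜ[ℂ] (a1 k ⊗ₜ[ℂ] (b1 j) (a0 k)))
  E3 : ∑ i, ∑ l, ((a1 i) (b0 l) ⊗ₜ[ℂ] (a0 i ⊗ₜ[ℂ] b1 l))
      + ∑ j, ∑ l, (b0 j ⊗ₜ[ℂ] ((b1 j) (b0 l) ⊗ₜ[ℂ] b1 l))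
      + ∑ j, ∑ l, (b0 j ⊗ₜ[ℂ] (b0 l ⊗ₜ[ℂ] ⁅b1 j, b1 l⁆)) = 0

variable {A : Type*} [CommRing A] [Algebra ℂ A]

/-- `V₁ = span_ℂ{a⁰ᵢ}`. -/
def GeomRMatrixDatum.V1 (D : GeomRMatrixDatum A) : Submodule ℂ A :=
  Submodule.span ℂ (Set.range D.a0)

/-- `V₂ = span_ℂ{b⁰ⱼ}`. -/
def GeomRMatrixDatum.V2 (D : GeomRMatrixDatum A) : Submodule ℂ A :=
  Submodule.span ℂ (Set.range D.b0)

/-- `V = V₁ + V₂`. -/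
def GeomRMatrixDatum.V (D : GeomRMatrixDatum A) : Submodule ℂ A := D.V1 ⊔ D.V2

theorem GeomRMatrixDatum.a0_mem_V (D : GeomRMatrixDatum A) (i : Fin D.m) :
    D.a0 i ∈ D.V :=
  Submodule.mem_sup_left (Submodule.subset_span (Set.mem_range_self i))

theorem GeomRMatrixDatum.b0_mem_V (D : GeomRMatrixDatum A) (j : Fin D.n) :
    D.b0 j ∈ D.V :=
  Submodule.mem_sup_right (Submodule.subset_span (Set.mem_range_self j))

section DualContraction

open LinearMap

variable {K A M N ι : Type*} [Field K] [AddCommGroup A] [Module K A] [AddCommGroup M] [Module K M]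
  [AddCommGroup N] [Module K N]

theorem LinearIndependent.exists_dual_apply_eq_ite [DecidableEq ι] {v : ι → M}
    (hv : LinearIndependent K v) (i : ι) :
    ∃ f : Module.Dual K M, ∀ k, f (v k) = if k = i then 1 else 0 := by
  let p := Submodule.span K (Set.range v)
  obtain ⟨f, hf⟩ := ((Finsupp.lapply i).comp (hv.repr : p →ₗ[K] ι →₀ K)).exists_extend
  refine ⟨f, fun k => ?_⟩
  have hk : v k ∈ p := Submodule.subset_span ⟨k, rfl⟩
  rw [show f (v k) = _ from LinearMap.congr_fun hf ⟨v k, hk⟩]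
  simp [hv.repr_eq_single k ⟨v k, hk⟩ rfl, Finsupp.single_apply]

theorem LinearIndependent.mem_range_of_sum_tmul_mem_range_lTensor [Fintype ι] {u : ι → A}
    (hu : LinearIndependent K u) (f : N →ₗ[K] M) {c : ι → M}
    (h : ∑ k, u k ⊗ₜ[K] c k ∈ range (f.lTensor A)) (i : ι) : c i ∈ range f := by
  classical
  obtain ⟨g, hg⟩ := hu.exists_dual_apply_eq_ite i
  obtain ⟨t, ht⟩ := h
  have hnat : TensorProduct.lid K M ∘ₗ g.rTensor M ∘ₗ f.lTensor A
      = f ∘ₗ TensorProduct.lid K N ∘ₗ g.rTensor N :=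
    TensorProduct.ext' fun a n => by simp
  refine ⟨TensorProduct.lid K N (g.rTensor N t), ?_⟩
  calc f (TensorProduct.lid K N (g.rTensor N t))
      = TensorProduct.lid K M (g.rTensor M (f.lTensor A t)) := (LinearMap.congr_fun hnat t).symm
    _ = c i := by simp [ht, hg]

end DualContraction

/-- The span of the `b¹ⱼ` is a Lie subalgebra of `Der(A)`. -/
theorem span_b1_lie_closed (D : GeomRMatrixDatum A) (j l : Fin D.n) :
    ⁅D.b1 j, D.b1 l⁆ ∈ Submodule.span ℂ (Set.range D.b1) := by
  set N := Submodule.span ℂ (Set.range D.b1)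
  let P := LinearMap.range ((N.subtype.lTensor A).lTensor A)
  have hb1 : ∀ (x y : A) (k : Fin D.n), x ⊗ₜ[ℂ] (y ⊗ₜ[ℂ] D.b1 k) ∈ P := fun x y k =>
    ⟨x ⊗ₜ (y ⊗ₜ ⟨D.b1 k, Submodule.subset_span ⟨k, rfl⟩⟩), rfl⟩
  have hbracket : ∑ j, D.b0 j ⊗ₜ[ℂ] ∑ l, D.b0 l ⊗ₜ[ℂ] ⁅D.b1 j, D.b1 l⁆ ∈ P := by
    simp only [TensorProduct.tmul_sum]
    rw [eq_neg_of_add_eq_zero_right D.E3]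
    exact neg_mem (add_mem (Submodule.sum_mem _ fun i _ => Submodule.sum_mem _ fun k _ => hb1 _ _ k)
      (Submodule.sum_mem _ fun i _ => Submodule.sum_mem _ fun k _ => hb1 _ _ k))
  have hrow := D.indep_b0.mem_range_of_sum_tmul_mem_range_lTensor _ hbracket j
  simpa using D.indep_b0.mem_range_of_sum_tmul_mem_range_lTensor _ hrow l
end

section
/- Given a geometric classical r-matrix datum on A with V invariant under every a¹ᵢ and b¹ⱼ, the operation ⋆ acts by derivations of the bracket: for all x,y,z ∈ V*, x⋆[y,z] = [x⋆y, z] + [y, x⋆z] in V*. -/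
open TensorProduct

set_option synthInstance.maxHeartbeats 1000000
set_option maxHeartbeats 1000000

variable {A : Type*} [CommRing A] [Algebra ℂ A]

/-- The operation `(x⋆y)(f) = Σᵢ x(a⁰ᵢ)·y(a¹ᵢ f)` on `V* = Module.Dual ℂ V`. -/
noncomputable def starOp (D : GeomRMatrixDatum A)
    (hA : ∀ i : Fin D.m, ∀ f ∈ D.V, D.a1 i f ∈ D.V)
    (x y : Module.Dual ℂ D.V) : Module.Dual ℂ D.V :=
  ∑ i, x ⟨D.a0 i, D.a0_mem_V i⟩ • (y ∘ₗ ((D.a1 i).toLinearMap.restrict (hA i)))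

/-- The operation `(x∘y)(f) = Σⱼ y(b⁰ⱼ)·x(b¹ⱼ f)` on `V* = Module.Dual ℂ V`. -/
noncomputable def circOp (D : GeomRMatrixDatum A)
    (hB : ∀ j : Fin D.n, ∀ f ∈ D.V, D.b1 j f ∈ D.V)
    (x y : Module.Dual ℂ D.V) : Module.Dual ℂ D.V :=
  ∑ j, y ⟨D.b0 j, D.b0_mem_V j⟩ • (x ∘ₗ ((D.b1 j).toLinearMap.restrict (hB j)))

/-- The bracket `[x,y] = x∘y + y⋆x` on `V*`. -/
noncomputable def bracketOp (D : GeomRMatrixDatum A)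
    (hA : ∀ i : Fin D.m, ∀ f ∈ D.V, D.a1 i f ∈ D.V)
    (hB : ∀ j : Fin D.n, ∀ f ∈ D.V, D.b1 j f ∈ D.V)
    (x y : Module.Dual ℂ D.V) : Module.Dual ℂ D.V :=
  circOp D hB x y + starOp D hA y x

/-!
Split `[y,z] = y∘z + z⋆y`. After extending `x, y, z` from `V` to linear forms on `A`
(possible since `V` has a complement), contracting (E1) against `y(· f) ⊗ z ⊗ x` gives
`x⋆(z⋆y) = z⋆(x⋆y) + (x⋆z)⋆y + (x∘z)⋆y`, and contracting (E2) against `z ⊗ y(· f) ⊗ x` gives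
`x⋆(y∘z) + (x∘z)⋆y = (x⋆y)∘z + y∘(x⋆z)`. Adding the two, the cross terms `(x∘z)⋆y` cancel.
-/

def Derivation.applyₗ {R A M : Type*} [CommSemiring R] [CommSemiring A] [Algebra R A]
    [AddCommMonoid M] [Module A M] [Module R M] [IsScalarTower R A M] (a : A) :
    Derivation R A M →ₗ[R] M where
  toFun d := d a
  map_add' _ _ := rfl
  map_smul' _ _ := rfl

@[simp]
theorem Derivation.applyₗ_apply {R A M : Type*} [CommSemiring R] [CommSemiring A] [Algebra R A]
    [AddCommMonoid M] [Module A M] [Module R M] [IsScalarTower R A M] (a : A)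
    (d : Derivation R A M) : Derivation.applyₗ a d = d a :=
  rfl

namespace GeomRMatrixDatum

open Module

variable (D : GeomRMatrixDatum A)

theorem E1_contract (φ : Dual ℂ (Derivation ℂ A A)) (ψ χ : Dual ℂ A) :
    ∑ i, ∑ k, φ ⁅D.a1 i, D.a1 k⁆ * (ψ (D.a0 i) * χ (D.a0 k))
      = ∑ i, ∑ k, φ (D.a1 i) * (ψ (D.a1 k (D.a0 i)) * χ (D.a0 k))
        + ∑ i, ∑ l, φ (D.a1 i) * (ψ (D.b0 l) * χ (D.b1 l (D.a0 i))) := by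
  simpa using congrArg (dualDistrib ℂ _ _ (φ ⊗ₜ dualDistrib ℂ _ _ (ψ ⊗ₜ χ))) D.E1

theorem E2_contract (ψ : Dual ℂ A) (φ : Dual ℂ (Derivation ℂ A A)) (χ : Dual ℂ A) :
    ∑ j, ∑ k, ψ (D.a1 k (D.b0 j)) * (φ (D.b1 j) * χ (D.a0 k))
      = ∑ j, ∑ k, ψ (D.b0 j) * (φ ⁅D.b1 j, D.a1 k⁆ * χ (D.a0 k))
        + ∑ j, ∑ k, ψ (D.b0 j) * (φ (D.a1 k) * χ (D.b1 j (D.a0 k))) := by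
  simpa using congrArg (dualDistrib ℂ _ _ (ψ ⊗ₜ dualDistrib ℂ _ _ (φ ⊗ₜ χ))) D.E2

end GeomRMatrixDatum

section Operations

variable (D : GeomRMatrixDatum A) (hA : ∀ i : Fin D.m, ∀ f ∈ D.V, D.a1 i f ∈ D.V)
  (hB : ∀ j : Fin D.n, ∀ f ∈ D.V, D.b1 j f ∈ D.V)

theorem starOp_apply (x y : Module.Dual ℂ D.V) (f : D.V) :
    starOp D hA x y f = ∑ i, x ⟨D.a0 i, D.a0_mem_V i⟩ * y ⟨D.a1 i f, hA i f f.2⟩ := by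
  simp [starOp, LinearMap.restrict_apply]

theorem circOp_apply (x y : Module.Dual ℂ D.V) (f : D.V) :
    circOp D hB x y f = ∑ j, y ⟨D.b0 j, D.b0_mem_V j⟩ * x ⟨D.b1 j f, hB j f f.2⟩ := by
  simp [circOp, LinearMap.restrict_apply]

theorem starOp_add_right (x y y' : Module.Dual ℂ D.V) :
    starOp D hA x (y + y') = starOp D hA x y + starOp D hA x y' := by
  simp only [starOp, LinearMap.add_comp, smul_add, Finset.sum_add_distrib]

theorem starOp_starOp (x y z : Module.Dual ℂ D.V) :
    starOp D hA x (starOp D hA y z)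
      = starOp D hA y (starOp D hA x z) + starOp D hA (starOp D hA x y) z
        + starOp D hA (circOp D hB x y) z := by
  obtain ⟨X, rfl⟩ := LinearMap.exists_extend x
  obtain ⟨Y, rfl⟩ := LinearMap.exists_extend y
  obtain ⟨Z, rfl⟩ := LinearMap.exists_extend z
  ext f
  have e1 := D.E1_contract (Z ∘ₗ Derivation.applyₗ (f : A)) Y X
  simp only [LinearMap.add_apply, starOp_apply, circOp_apply, LinearMap.comp_apply,
    Submodule.subtype_apply, Derivation.applyₗ_apply, Derivation.commutator_apply, map_sub,
    sub_mul, Finset.sum_sub_distrib, Finset.mul_sum, Finset.sum_mul] at e1 ⊢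
  rw [Finset.sum_comm] at e1
  simp only [mul_comm, mul_left_comm] at e1 ⊢
  linear_combination e1

theorem starOp_circOp (x y z : Module.Dual ℂ D.V) :
    starOp D hA x (circOp D hB y z) + starOp D hA (circOp D hB x z) y
      = circOp D hB (starOp D hA x y) z + circOp D hB y (starOp D hA x z) := by
  obtain ⟨X, rfl⟩ := LinearMap.exists_extend x
  obtain ⟨Y, rfl⟩ := LinearMap.exists_extend y
  obtain ⟨Z, rfl⟩ := LinearMap.exists_extend z
  ext f
  have e2 := D.E2_contract Z (Y ∘ₗ Derivation.applyₗ (f : A)) X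
  simp only [LinearMap.add_apply, starOp_apply, circOp_apply, LinearMap.comp_apply,
    Submodule.subtype_apply, Derivation.applyₗ_apply, Derivation.commutator_apply, map_sub,
    mul_sub, sub_mul, Finset.sum_sub_distrib, Finset.mul_sum, Finset.sum_mul] at e2 ⊢
  simp only [Finset.sum_comm (γ := Fin D.m) (α := Fin D.n)] at e2 ⊢
  simp only [mul_comm, mul_left_comm] at e2 ⊢
  linear_combination -e2

end Operations

/-- The operation `⋆` acts by derivations of the bracket:
`x⋆[y,z] = [x⋆y, z] + [y, x⋆z]`. -/
theorem star_acts_by_derivations (D : GeomRMatrixDatum A)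
    (hA : ∀ i : Fin D.m, ∀ f ∈ D.V, D.a1 i f ∈ D.V)
    (hB : ∀ j : Fin D.n, ∀ f ∈ D.V, D.b1 j f ∈ D.V)
    (x y z : Module.Dual ℂ D.V) :
    starOp D hA x (bracketOp D hA hB y z)
      = bracketOp D hA hB (starOp D hA x y) z
        + bracketOp D hA hB y (starOp D hA x z) := by
  simp only [bracketOp, starOp_add_right]
  rw [starOp_starOp D hA hB x z y]
  linear_combination (norm := abel) starOp_circOp D hA hB x y z
end

section
/- Given a geometric classical r-matrix datum on A with V invariant under every a¹ᵢ and b¹ⱼ, the ℂ-linear map ρ: V* → Der(A) defined by ρ(x) = Σᵢ x(a⁰ᵢ)·a¹ᵢ + Σⱼ x(b⁰ⱼ)·b¹ⱼ is a Lie algebra homomorphism from (V*, [·,·]) to Der(A): ρ([x,y]) = [ρ(x), ρ(y)] for all x,y ∈ V*. -/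
/-!
Extend `x, y` to functionals `X, Y` on all of `A`. Then `[x, y]` is the restriction of
`X ∘ ρ(Y)`, so it suffices to show `⁅ρ X, ρ Y⁆ = ρ (X ∘ ρ Y)` for functionals on `A`.
Split `ρ = ρ_a + ρ_b` along the two families. Contracting the two `A`-slots of (E1), (E2)
and (E3) with `X` and `Y` expresses `⁅ρ_a X, ρ_a Y⁆`, `⁅ρ_b X, ρ_a Y⁆` and `⁅ρ_b X, ρ_b Y⁆`
through `ρ_a` and `ρ_b` of composed functionals, and the four brackets of `⁅ρ X, ρ Y⁆`
add up to `ρ (X ∘ ρ Y)`.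
-/

open TensorProduct

set_option synthInstance.maxHeartbeats 1000000
set_option maxHeartbeats 1000000

variable {A : Type*} [CommRing A] [Algebra ℂ A]

/-- The map `ρ : V* → Der(A)`, `ρ(x) = Σᵢ x(a⁰ᵢ)·a¹ᵢ + Σⱼ x(b⁰ⱼ)·b¹ⱼ`. -/
noncomputable def rhoOp (D : GeomRMatrixDatum A)
    (x : Module.Dual ℂ D.V) : Derivation ℂ A A :=
  ∑ i, x ⟨D.a0 i, D.a0_mem_V i⟩ • D.a1 i + ∑ j, x ⟨D.b0 j, D.b0_mem_V j⟩ • D.b1 j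

namespace Module.Dual

variable {R M N : Type*} [CommSemiring R] [AddCommMonoid M] [AddCommMonoid N]
  [Module R M] [Module R N]

def applyLeft (f : Dual R N) : N ⊗[R] M →ₗ[R] M :=
  TensorProduct.lid R M ∘ₗ f.rTensor M

@[simp]
theorem applyLeft_tmul (f : Dual R N) (n : N) (m : M) :
    applyLeft f (n ⊗ₜ m) = f n • m :=
  rfl

def applyRight (f : Dual R N) : M ⊗[R] N →ₗ[R] M :=
  TensorProduct.rid R M ∘ₗ f.lTensor M

@[simp]
theorem applyRight_tmul (f : Dual R N) (m : M) (n : N) :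
    applyRight f (m ⊗ₜ n) = f n • m :=
  rfl

end Module.Dual

theorem Derivation.finset_sum_apply {R B M ι : Type*} [CommSemiring R] [CommSemiring B]
    [Algebra R B] [AddCommMonoid M] [Module B M] [Module R M] (s : Finset ι)
    (d : ι → Derivation R B M) (b : B) : (∑ i ∈ s, d i) b = ∑ i ∈ s, d i b := by
  rw [← Derivation.coeFnAddMonoidHom_apply, map_sum, Finset.sum_apply]; rfl

namespace GeomRMatrixDatum

open Module.Dual

variable (D : GeomRMatrixDatum A)

noncomputable def rhoA : Module.Dual ℂ A →ₗ[ℂ] Derivation ℂ A A :=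
  ∑ i, (eval ℂ A (D.a0 i)).smulRight (D.a1 i)

noncomputable def rhoB : Module.Dual ℂ A →ₗ[ℂ] Derivation ℂ A A :=
  ∑ j, (eval ℂ A (D.b0 j)).smulRight (D.b1 j)

noncomputable def rho : Module.Dual ℂ A →ₗ[ℂ] Derivation ℂ A A := D.rhoA + D.rhoB

theorem rhoA_apply (X : Module.Dual ℂ A) : D.rhoA X = ∑ i, X (D.a0 i) • D.a1 i := by
  simp [rhoA]

theorem rhoB_apply (X : Module.Dual ℂ A) : D.rhoB X = ∑ j, X (D.b0 j) • D.b1 j := by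
  simp [rhoB]

variable (X Y : Module.Dual ℂ A)

theorem lie_rhoA_rhoA :
    ⁅D.rhoA X, D.rhoA Y⁆ = D.rhoA (X ∘ₗ D.rhoA Y) + D.rhoA (Y ∘ₗ D.rhoB X) := by
  have h := congrArg (applyRight (dualDistrib ℂ A A (X ⊗ₜ Y))) D.E1
  simp only [map_add, map_sum, applyRight_tmul, dualDistrib_apply] at h
  simp only [rhoA_apply, rhoB_apply, sum_lie, lie_sum, smul_lie, lie_smul, smul_smul,
    Finset.smul_sum, Finset.sum_smul, LinearMap.comp_apply, Derivation.coeFn_coe,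
    Derivation.finset_sum_apply, Derivation.smul_apply, map_sum, map_smul, smul_eq_mul]
  rw [Finset.sum_comm]
  simpa only [mul_comm] using h

theorem lie_rhoB_rhoA :
    ⁅D.rhoB X, D.rhoA Y⁆ = D.rhoB (X ∘ₗ D.rhoA Y) - D.rhoA (Y ∘ₗ D.rhoB X) := by
  have h := congrArg (applyLeft X ∘ₗ (applyRight Y).lTensor A) D.E2
  simp only [map_add, map_sum, LinearMap.comp_apply, LinearMap.lTensor_tmul,
    applyRight_tmul, applyLeft_tmul, smul_smul] at h
  rw [eq_sub_iff_add_eq]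
  simp only [rhoA_apply, rhoB_apply, sum_lie, lie_sum, smul_lie, lie_smul, smul_smul,
    Finset.smul_sum, Finset.sum_smul, LinearMap.comp_apply, Derivation.coeFn_coe,
    Derivation.finset_sum_apply, Derivation.smul_apply, map_sum, map_smul, smul_eq_mul]
  convert h.symm using 2
  · rw [Finset.sum_comm]
    simp only [mul_comm]
  · exact Finset.sum_comm
  · simp only [mul_comm]

theorem lie_rhoB_rhoB :
    ⁅D.rhoB X, D.rhoB Y⁆ = D.rhoB (Y ∘ₗ D.rhoA X) + D.rhoB (X ∘ₗ D.rhoB Y) := by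
  have h := congrArg (applyLeft Y ∘ₗ (applyLeft X).lTensor A) D.E3
  simp only [map_add, map_sum, map_zero, LinearMap.comp_apply, LinearMap.lTensor_tmul,
    applyLeft_tmul, smul_smul] at h
  rw [← lie_skew, neg_eq_iff_add_eq_zero, add_comm]
  simp only [rhoA_apply, rhoB_apply, sum_lie, lie_sum, smul_lie, lie_smul, smul_smul,
    Finset.smul_sum, Finset.sum_smul, LinearMap.comp_apply, Derivation.coeFn_coe,
    Derivation.finset_sum_apply, Derivation.smul_apply, map_sum, map_smul, smul_eq_mul]
  convert h using 2
  · congr 1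
    · rw [Finset.sum_comm]
      simp only [mul_comm]
    · exact Finset.sum_comm
  · rw [Finset.sum_comm]
    simp only [mul_comm]

theorem lie_rho_rho : ⁅D.rho X, D.rho Y⁆ = D.rho (X ∘ₗ D.rho Y) := by
  simp only [rho, LinearMap.add_apply, Derivation.coe_add_linearMap, LinearMap.comp_add,
    map_add, add_lie, lie_add]
  rw [lie_rhoA_rhoA, lie_rhoB_rhoA, ← lie_skew (D.rhoA X), lie_rhoB_rhoA, lie_rhoB_rhoB]
  abel

variable {D}

theorem rhoOp_comp_subtype : rhoOp D (X ∘ₗ D.V.subtype) = D.rho X := by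
  simp [rhoOp, rho, rhoA_apply, rhoB_apply]

theorem bracketOp_comp_subtype
    (hA : ∀ i : Fin D.m, ∀ f ∈ D.V, D.a1 i f ∈ D.V)
    (hB : ∀ j : Fin D.n, ∀ f ∈ D.V, D.b1 j f ∈ D.V) :
    bracketOp D hA hB (X ∘ₗ D.V.subtype) (Y ∘ₗ D.V.subtype) = (X ∘ₗ D.rho Y) ∘ₗ D.V.subtype := by
  ext v
  simp only [bracketOp, circOp, starOp, rho, rhoA_apply, rhoB_apply, LinearMap.add_apply,
    LinearMap.coe_comp, Function.comp_apply, Submodule.coe_subtype, LinearMap.coe_sum,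
    Finset.sum_apply, LinearMap.coe_smul, Pi.smul_apply, LinearMap.coe_restrict_apply,
    Derivation.coeFn_coe, Derivation.coe_add_linearMap, Derivation.finset_sum_apply,
    Derivation.coe_smul, map_add, map_sum, map_smul, smul_eq_mul]
  exact add_comm _ _

end GeomRMatrixDatum

/-- `ρ` is a Lie algebra homomorphism `(V*, [·,·]) → Der(A)`. -/
theorem rho_is_lie_hom (D : GeomRMatrixDatum A)
    (hA : ∀ i : Fin D.m, ∀ f ∈ D.V, D.a1 i f ∈ D.V)
    (hB : ∀ j : Fin D.n, ∀ f ∈ D.V, D.b1 j f ∈ D.V)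
    (x y : Module.Dual ℂ D.V) :
    rhoOp D (bracketOp D hA hB x y) = ⁅rhoOp D x, rhoOp D y⁆ := by
  obtain ⟨X, rfl⟩ := LinearMap.exists_extend x
  obtain ⟨Y, rfl⟩ := LinearMap.exists_extend y
  simp only [GeomRMatrixDatum.bracketOp_comp_subtype, GeomRMatrixDatum.rhoOp_comp_subtype,
    GeomRMatrixDatum.lie_rho_rho]
end
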